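/- arXiv:math/9805109 — 2 statements merged into one kernel-verified Lean document; each statement's English description precedes it below -/
import Mathlib

section
/- Let p > 2 be an integer and suppose a family c_{jkl}^{βγδ} of real numbers (indices j,k,l ∈ {1,...,q}, β,γ,δ ∈ {1,...,p}) satisfies δ_α^ε c_{jkl}^{βγδ} + δ_α^δ c_{ljk}^{βεγ} + δ_α^γ c_{jlk}^{βδε} = 0 for all indices α, ε, γ, δ, β, j, k, l. Then c = 0. -/
/-- For `p > 2`: if a family `c_{jkl}^{βγδ}` of reals satisfies
`δ_α^ε c_{jkl}^{βγδ} + δ_α^δ c_{ljk}^{βεγ} + δ_α^γ c_{jlk}^{βδε} = 0` for all indices,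
then `c = 0`. -/
theorem stmt_11 (p q : ℕ) (hp : 2 < p)
    (c : Fin q → Fin q → Fin q → Fin p → Fin p → Fin p → ℝ)
    (h : ∀ (α ε γ δ β : Fin p) (j k l : Fin q),
      (if α = ε then (1 : ℝ) else 0) * c j k l β γ δ +
      (if α = δ then (1 : ℝ) else 0) * c l j k β ε γ +
      (if α = γ then (1 : ℝ) else 0) * c j l k β δ ε = 0) :
    c = 0 := by
  funext j k l β γ δ
  -- Taking `α = ε` outside `{γ, δ}`, which `p > 2` allows, kills the last two Kronecker deltas.
  obtain ⟨α, hαγ, hαδ⟩ := Fin.exists_ne_and_ne_of_two_lt γ δ hp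
  simpa [hαγ, hαδ] using h α α γ δ β j k l
end

section
/- If p = 2, then any tensor a_{αjk}^{iβγ} with α,β,γ ∈ {1,2}, satisfying the skew-symmetry a_{αjk}^{iβγ} = -a_{αkj}^{iγβ} and the trace conditions a_{αjk}^{iαγ} = 0 and a_{αik}^{iβγ} = 0 (summation over repeated indices), has vanishing part a_α, i.e., a_{α(jk)}^{iβγ} = 0 for all indices. Symmetrically, if q = 2 (so i,j,k ∈ {1,2}) then a_{αjk}^{i(βγ)} = 0. -/
/-! For `p = 2`, fix `j, k, i` and put `s α β γ = a_{αjk}^{iβγ} + a_{αkj}^{iβγ}`. The skew-symmetry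
makes `s` antisymmetric in `(β, γ)`, and the first trace condition says `∑_α s α α γ = 0`. Over
two values these two facts already force `s = 0`: antisymmetry kills `s α β β`, the trace then
kills `s 0 0 1` and `s 1 1 0`, and antisymmetry the two remaining entries. The case `q = 2` is the
same lemma applied to the symmetrization in `(β, γ)`, read as a function of `(i, j, k)`, with the
second trace condition. -/

theorem eq_zero_of_antisymm_of_trace_eq_zero {M : Type*} [AddCommGroup M] [IsAddTorsionFree M]
    {s : Fin 2 → Fin 2 → Fin 2 → M} (hanti : ∀ α β γ, s α β γ = -s α γ β)
    (htrace : ∀ γ, ∑ α, s α α γ = 0) : s = 0 := by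
  have hdiag : ∀ α β, s α β β = 0 := fun α β => self_eq_neg.mp (hanti α β β)
  have htrace_two : ∀ γ, s 0 0 γ + s 1 1 γ = 0 := fun γ => by
    simpa only [Fin.sum_univ_two] using htrace γ
  have h001 : s 0 0 1 = 0 := by simpa only [hdiag, add_zero] using htrace_two 1
  have h110 : s 1 1 0 = 0 := by simpa only [hdiag, zero_add] using htrace_two 0
  ext α β γ
  fin_cases α <;> fin_cases β <;> fin_cases γ <;>
    simp [hdiag, h001, h110, hanti 0 1 0, hanti 1 0 1]

/-- If `p = 2`, the subtensor `a_α` of the torsion tensor vanishes: every tensor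
`a_{αjk}^{iβγ}` with `α,β,γ ∈ {1,2}` satisfying the skew-symmetry and trace conditions
has `a_{α(jk)}^{iβγ} = 0`. Symmetrically, if `q = 2` then `a_{αjk}^{i(βγ)} = 0`. -/
theorem stmt_15 :
    (∀ (q : ℕ) (a : Fin 2 → Fin q → Fin q → Fin q → Fin 2 → Fin 2 → ℝ),
      (∀ α j k i β γ, a α j k i β γ = -a α k j i γ β) →
      (∀ (j k i : Fin q) (γ : Fin 2), ∑ α, a α j k i α γ = 0) →
      (∀ (α β γ : Fin 2) (k : Fin q), ∑ i, a α i k i β γ = 0) →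
      ∀ α j k i β γ, a α j k i β γ + a α k j i β γ = 0) ∧
    (∀ (p : ℕ) (a : Fin p → Fin 2 → Fin 2 → Fin 2 → Fin p → Fin p → ℝ),
      (∀ α j k i β γ, a α j k i β γ = -a α k j i γ β) →
      (∀ (j k i : Fin 2) (γ : Fin p), ∑ α, a α j k i α γ = 0) →
      (∀ (α β γ : Fin p) (k : Fin 2), ∑ i, a α i k i β γ = 0) →
      ∀ α j k i β γ, a α j k i β γ + a α j k i γ β = 0) := by
  refine ⟨fun q a hskew htrace _ α j k i β γ => ?_, fun p a hskew _ htrace α j k i β γ => ?_⟩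
  · have hanti : ∀ α β γ, a α j k i β γ + a α k j i β γ = -(a α j k i γ β + a α k j i γ β) :=
      fun α β γ => by rw [hskew α j k i β γ, hskew α k j i β γ]; abel
    have htrace_sym : ∀ γ, ∑ α, (a α j k i α γ + a α k j i α γ) = 0 := fun γ => by
      rw [Finset.sum_add_distrib, htrace, htrace, add_zero]
    exact congr_fun₃ (eq_zero_of_antisymm_of_trace_eq_zero hanti htrace_sym) α β γ
  · have hanti : ∀ i j k, a α j k i β γ + a α j k i γ β = -(a α k j i β γ + a α k j i γ β) :=
      fun i j k => by rw [hskew α j k i β γ, hskew α j k i γ β]; abel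
    have htrace_sym : ∀ k, ∑ i, (a α i k i β γ + a α i k i γ β) = 0 := fun k => by
      rw [Finset.sum_add_distrib, htrace, htrace, add_zero]
    exact congr_fun₃ (eq_zero_of_antisymm_of_trace_eq_zero hanti htrace_sym) i j k
end
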